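/- Fix an odd prime power q, let k be an algebraic closure of F_{q²}, and let f ∈ F_{q²}[λ] be monic irreducible, self-reciprocal, of odd degree d ≥ 3. Let λ_1, …, λ_d be an admissible enumeration of the roots of f, i.e., the λ_j are pairwise distinct, are exactly the roots of f, and satisfy λ_j^{q²} = λ_{j+1} for j < d and λ_d^{q²} = λ_1. Extend the indexing to all j ∈ ℤ by periodicity modulo d. Then for every j ∈ ℤ one has (λ_j^{-1})^q = λ_{j + (d+1)/2}. -/
import Mathlib


/-- The polynomial obtained by applying `x ↦ x^q` to the coefficients of `f`. -/
noncomputable def frobPoly {F : Type*} [Semiring F] (q : ℕ) (f : Polynomial F) :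
    Polynomial F :=
  f.sum fun n a => Polynomial.C (a ^ q) * Polynomial.X ^ n

/-- The reciprocal polynomial `f*(λ) = (f(0)^σ)⁻¹ · λ^(deg f) · f^σ(1/λ)` of a
polynomial over `F_{q²}`, where `σ : x ↦ x^q` is the `q`-power Frobenius. -/
noncomputable def recip2 {F : Type*} [Field F] (q : ℕ) (f : Polynomial F) : Polynomial F :=
  Polynomial.C ((f.coeff 0 ^ q)⁻¹) * (frobPoly q f).reverse

/-- A *cyclic admissible enumeration* for `f`: a cyclically-indexed tuple
`Λ : ZMod d → k` of nonzero pairwise-distinct elements which are exactly the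
roots of `f` in `k`, with `Λ j ^ e = Λ (j+1)` for all `j` (here `e = q²`). -/
def AdmEnumC {F k : Type*} [CommRing F] [Field k] [Algebra F k] (e : ℕ)
    (f : Polynomial F) (d : ℕ) (Λ : ZMod d → k) : Prop :=
  (∀ i, Λ i ≠ 0) ∧ Function.Injective Λ ∧ Set.range Λ = f.rootSet k ∧
  ∀ i : ZMod d, Λ i ^ e = Λ (i + 1)

/-- Fix an odd prime power `q`, `k` an algebraic closure of
`F_{q²}`, and `f ∈ F_{q²}[λ]` monic irreducible self-reciprocal of odd degree
`d ≥ 3`.  If `λ_1, …, λ_d` is an admissible enumeration of the roots of `f`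
(indexed cyclically mod `d`), then `(λ_j⁻¹)^q = λ_{j + (d+1)/2}` for all `j`. -/
theorem stmt7 (q : ℕ) (hq : ∃ p m : ℕ, p.Prime ∧ 0 < m ∧ q = p ^ m) (hodd : Odd q)
    {F : Type*} [Field F] [Fintype F] (hcard : Fintype.card F = q ^ 2)
    (k : Type*) [Field k] [Algebra F k] [IsAlgClosure F k]
    (f : Polynomial F) (hmonic : f.Monic) (hirr : Irreducible f)
    (hsr : recip2 q f = f)
    (d : ℕ) (hd : d = f.natDegree) (hdodd : Odd d) (hd3 : 3 ≤ d)
    (Λ : ZMod d → k) (hΛ : AdmEnumC (q ^ 2) f d Λ) :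
    ∀ j : ZMod d, ((Λ j)⁻¹) ^ q = Λ (j + (((d + 1) / 2 : ℕ) : ZMod d)) := by
  obtain ⟨p, m, hp, hm, hqpm⟩ := hq
  obtain ⟨hne, hinj, hrange, hstep⟩ := hΛ
  haveI : NeZero d := ⟨by omega⟩
  haveI hpfact : Fact p.Prime := ⟨hp⟩
  -- characteristic of F is p
  obtain ⟨p', hcp'⟩ := CharP.exists F
  haveI : CharP F p' := hcp'
  haveI hp'prime : Fact p'.Prime := ⟨CharP.char_is_prime F p'⟩
  obtain ⟨n, -, hcardn⟩ := FiniteField.card F p'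
  have hpp' : p = p' := by
    have : p ∣ p' ^ (n : ℕ) := by
      rw [← hcardn, hcard, hqpm, ← pow_mul]
      exact dvd_pow_self p (by positivity)
    exact ((Nat.prime_dvd_prime_iff_eq hp hp'prime.out).mp
      (hp.dvd_of_dvd_pow this))
  haveI : CharP F p := hpp' ▸ hcp'
  haveI : CharP k p := charP_of_injective_algebraMap (algebraMap F k).injective p
  -- Frobenius x ↦ x^q is a ring hom on k
  set φ : k →+* k := iterateFrobenius k p m with hφ
  have hφdef : ∀ z : k, φ z = z ^ q := by
    intro z; rw [hφ]; simp [iterateFrobenius_def, hqpm]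
  -- key: aeval (y^q) (frobPoly q f) = (aeval y f)^q
  have hq0 : q ≠ 0 := by rw [hqpm]; exact pow_ne_zero m hp.ne_zero
  have key : ∀ y : k, (Polynomial.aeval (y ^ q)) (frobPoly q f) = ((Polynomial.aeval y) f) ^ q := by
    suffices h : ∀ y : k, (Polynomial.aeval (φ y)) (frobPoly q f) = φ ((Polynomial.aeval y) f) by
      intro y
      have := h y
      rwa [hφdef, hφdef] at this
    intro y
    conv_rhs => rw [f.as_sum_support_C_mul_X_pow]
    rw [frobPoly, Polynomial.sum_def, map_sum, map_sum, map_sum]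
    refine Finset.sum_congr rfl fun n _ => ?_
    simp only [map_mul, map_pow, Polynomial.aeval_C, Polynomial.aeval_X, hφdef]
    rw [mul_pow, ← pow_mul, ← pow_mul, mul_comm n q]
  -- f(0) ≠ 0
  have hc0 : f.coeff 0 ≠ 0 := by
    intro h
    have hdvd : Polynomial.X ∣ f := Polynomial.X_dvd_iff.mpr h
    obtain ⟨c, hc⟩ := hdvd
    rcases hirr.isUnit_or_isUnit hc with h1 | h1
    · exact Polynomial.not_isUnit_X h1
    · have : f.natDegree = 1 := by
        rw [hc, Polynomial.natDegree_mul Polynomial.X_ne_zero h1.ne_zero,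
          Polynomial.natDegree_X, Polynomial.natDegree_eq_zero_of_isUnit h1]
      omega
  -- root inversion
  have hinvroot : ∀ x : k, x ≠ 0 → (Polynomial.aeval x) f = 0 →
      (Polynomial.aeval ((x⁻¹) ^ q)) f = 0 := by
    intro x hx hroot
    set g := frobPoly q f with hg
    have hy : x ^ q ≠ 0 := pow_ne_zero _ hx
    letI : Invertible (x ^ q) := invertibleOfNonzero hy
    have h1 : Polynomial.eval₂ (algebraMap F k) (x ^ q) g = 0 := by
      rw [← Polynomial.aeval_def, key, hroot, zero_pow hq0]
    have h2 : Polynomial.eval₂ (algebraMap F k) (⅟ (x ^ q)) g.reverse = 0 :=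
      (Polynomial.eval₂_reverse_eq_zero_iff (algebraMap F k) (x ^ q) g).mpr h1
    have h3 : (⅟ (x ^ q) : k) = (x⁻¹) ^ q := by rw [invOf_eq_inv, inv_pow]
    calc (Polynomial.aeval ((x⁻¹) ^ q)) f
        = (Polynomial.aeval ((x⁻¹) ^ q)) (recip2 q f) := by rw [hsr]
      _ = 0 := by
          rw [recip2, map_mul, Polynomial.aeval_C, Polynomial.aeval_def, ← h3, ← hg, h2, mul_zero]
  -- each Λ j is a root
  have hroot : ∀ j : ZMod d, (Polynomial.aeval (Λ j)) f = 0 := by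
    intro j
    have : Λ j ∈ f.rootSet k := hrange ▸ Set.mem_range_self j
    exact (Polynomial.mem_rootSet.mp this).2
  have hmem : ∀ j : ZMod d, ∃ i, ((Λ j)⁻¹) ^ q = Λ i := by
    intro j
    have h1 : ((Λ j)⁻¹) ^ q ∈ f.rootSet k :=
      Polynomial.mem_rootSet.mpr ⟨hmonic.ne_zero, hinvroot _ (hne j) (hroot j)⟩
    obtain ⟨i, hi⟩ := (hrange ▸ h1 : ((Λ j)⁻¹) ^ q ∈ Set.range Λ)
    exact ⟨i, hi.symm⟩
  obtain ⟨s, hs⟩ := hmem 0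
  -- shift lemma
  have hshift : ∀ n : ℕ, ((Λ (n : ZMod d))⁻¹) ^ q = Λ ((n : ZMod d) + s) := by
    intro n
    induction n with
    | zero => simpa using hs
    | succ n ih =>
        have hcast : ((n + 1 : ℕ) : ZMod d) = (n : ZMod d) + 1 := by push_cast; ring
        have hcomm : ∀ (a : k) (e : ℕ), ((a ^ e)⁻¹) ^ q = (((a⁻¹) ^ q)) ^ e := by
          intro a e
          rw [← inv_pow, ← pow_mul, ← pow_mul, mul_comm]
        rw [hcast, ← hstep, hcomm, ih, hstep, add_right_comm]
  have hshift' : ∀ j : ZMod d, ((Λ j)⁻¹) ^ q = Λ (j + s) := by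
    intro j
    have := hshift j.val
    rwa [ZMod.natCast_val, ZMod.cast_id] at this
  -- 2s = 1
  have h2s : s + s = 1 := by
    have h1 : ∀ j : ZMod d, Λ (j + s + s) = Λ (j + 1) := by
      intro j
      rw [← hshift' (j + s), ← hshift' j, ← inv_pow, inv_inv, ← pow_mul, ← pow_two, hstep]
    have := hinj (h1 0)
    simpa using this
  -- conclude s = (d+1)/2
  have hmval : (((d + 1) / 2 : ℕ) : ZMod d) + (((d + 1) / 2 : ℕ) : ZMod d) = 1 := by
    have hdd : (d + 1) / 2 + (d + 1) / 2 = d + 1 := by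
      obtain ⟨t, ht⟩ := hdodd; omega
    have : ((((d + 1) / 2 + (d + 1) / 2 : ℕ)) : ZMod d) = ((d + 1 : ℕ) : ZMod d) := by rw [hdd]
    push_cast at this
    simpa [ZMod.natCast_self] using this
  have hunit : IsUnit (2 : ZMod d) := by
    have := (ZMod.isUnit_iff_coprime 2 d).mpr (Nat.coprime_two_left.mpr hdodd)
    simpa using this
  have hseq : s = (((d + 1) / 2 : ℕ) : ZMod d) := by
    have h2 : (2 : ZMod d) * s = (2 : ZMod d) * (((d + 1) / 2 : ℕ) : ZMod d) := by
      rw [two_mul, two_mul, h2s, hmval]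
    exact hunit.mul_left_cancel h2
  intro j
  rw [hshift' j, hseq]
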